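/- Let Δ be a compact Hausdorff space, u : Δ → ℝ continuous, v : Δ → ℝ upper semicontinuous; set f(α) = max{v(w) : w ∈ Δ, u(w) = α} (−∞ if empty), τ(q) = min_{w∈Δ}(q·u(w) − v(w)), and M(q) = {w ∈ Δ : q·u(w) − v(w) = τ(q)}. If M(q) is connected, then f(α) = τ*(α) for all α ∈ ∂τ(q). Moreover, if M(q) is a singleton, then τ is differentiable at q. -/
import Mathlib


open Filter Set Topology

noncomputable section

variable {Δ : Type*} [TopologicalSpace Δ]

/-- The unconstrained dual `τ(q) = min_{w∈Δ} (q·u(w) − v(w))`. -/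
def tauOpt (u v : Δ → ℝ) (q : ℝ) : ℝ :=
  sInf (Set.range fun w => q * u w - v w)

/-- The constrained optimum `f(α) = max{v(w) : u(w) = α}`, valued in `EReal`
(with value `−∞ = ⊥` if the constraint set is empty). -/
def fOpt (u v : Δ → ℝ) (α : ℝ) : EReal :=
  sSup ((fun w => ((v w : ℝ) : EReal)) '' {w | u w = α})

/-- The concave conjugate `g*(α) = inf_{q∈ℝ} (qα − g(q))`, valued in `EReal`. -/
def concConj (g : ℝ → ℝ) (α : ℝ) : EReal :=
  ⨅ q : ℝ, ((q * α - g q : ℝ) : EReal)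

/-- `τ` is supported at `(q, α)`: there is `w ∈ Δ` with `u(w) = α` and
`τ(q) = q·u(w) − v(w)`. -/
def SupportedAt (u v : Δ → ℝ) (q α : ℝ) : Prop :=
  ∃ w : Δ, u w = α ∧ tauOpt u v q = q * u w - v w

/-- `α` belongs to the subdifferential `∂τ(q)` of the concave function `τ` at `q`,
i.e. the line through `(q, τ(q))` with slope `α` lies above the graph of `τ`. -/
def InSubdiff (τ : ℝ → ℝ) (q α : ℝ) : Prop :=
  ∀ y : ℝ, τ y ≤ τ q + α * (y - q)

/-- A lower semicontinuous function attains its minimum on a nonempty closed subset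
of a compact space. -/
lemma lsc_exists_min_on [CompactSpace Δ] {g : Δ → ℝ} (hg : LowerSemicontinuous g)
    {S : Set Δ} (hS : IsClosed S) (hne : S.Nonempty) :
    ∃ x ∈ S, ∀ y ∈ S, g x ≤ g y := by
  have : Nonempty S := hne.to_subtype
  set K : S → Set Δ := fun y => {x ∈ S | g x ≤ g y.1} with hK
  have hKclosed : ∀ y : S, IsClosed (K y) := fun y =>
    hS.inter (hg.isClosed_preimage (g y.1))
  obtain ⟨x, hx⟩ : (⋂ y : S, K y).Nonempty := by
    refine IsCompact.nonempty_iInter_of_directed_nonempty_isCompact_isClosed K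
      ?_ (fun y => ⟨y.1, y.2, le_rfl⟩) (fun y => (hKclosed y).isCompact) hKclosed
    intro y z
    rcases le_total (g y.1) (g z.1) with h | h
    · exact ⟨y, le_rfl, fun x hx => ⟨hx.1, hx.2.trans h⟩⟩
    · exact ⟨z, fun x hx => ⟨hx.1, hx.2.trans h⟩, le_rfl⟩
  simp only [mem_iInter] at hx
  obtain ⟨y₀⟩ := ‹Nonempty S›
  exact ⟨x, (hx y₀).1, fun y hy => (hx ⟨y, hy⟩).2⟩

lemma lsc_aux (u v : Δ → ℝ) (hu : Continuous u) (hv : UpperSemicontinuous v) (q : ℝ) :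
    LowerSemicontinuous fun w => q * u w - v w := by
  have h1 : LowerSemicontinuous fun w => q * u w :=
    (continuous_const.mul hu).lowerSemicontinuous
  have h2 : LowerSemicontinuous fun w => -v w := by
    intro x c hc
    have hc' : c < -v x := hc
    filter_upwards [hv x (-c) (by linarith)] with y hy
    show c < -v y
    linarith
  simpa [sub_eq_add_neg] using h1.add h2

/-- `τ(q)` is attained and is a lower bound. -/
lemma tau_min [CompactSpace Δ] [Nonempty Δ] (u v : Δ → ℝ) (hu : Continuous u)
    (hv : UpperSemicontinuous v) (q : ℝ) :
    (∃ w₀, q * u w₀ - v w₀ = tauOpt u v q) ∧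
      ∀ w, tauOpt u v q ≤ q * u w - v w := by
  obtain ⟨w₀, -, hmin⟩ := lsc_exists_min_on (lsc_aux u v hu hv q) isClosed_univ
    univ_nonempty
  have hbdd : BddBelow (Set.range fun w => q * u w - v w) := by
    refine ⟨q * u w₀ - v w₀, ?_⟩
    rintro _ ⟨w, rfl⟩
    exact hmin w trivial
  have hle : ∀ w, tauOpt u v q ≤ q * u w - v w := fun w =>
    csInf_le hbdd (mem_range_self w)
  refine ⟨⟨w₀, le_antisymm ?_ (hle w₀)⟩, hle⟩
  refine le_csInf (range_nonempty _) ?_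
  rintro _ ⟨w, rfl⟩
  exact hmin w trivial

/-- Key lemma: if `α` is a subgradient of `τ` at `q`, then some minimizer `w` at `q`
satisfies `u w ≤ α`. -/
lemma key_le [CompactSpace Δ] [Nonempty Δ] (u v : Δ → ℝ) (hu : Continuous u)
    (hv : UpperSemicontinuous v) (q α : ℝ) (h : InSubdiff (tauOpt u v) q α) :
    ∃ w, q * u w - v w = tauOpt u v q ∧ u w ≤ α := by
  by_contra hcon
  push_neg at hcon
  obtain ⟨⟨w₀, hw₀⟩, hlow⟩ := tau_min u v hu hv q
  set M := {w : Δ | q * u w - v w = tauOpt u v q} with hM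
  have hMclosed : IsClosed M := by
    have : M = {w : Δ | q * u w - v w ≤ tauOpt u v q} := by
      ext w
      exact ⟨fun hw => le_of_eq hw, fun hw => le_antisymm hw (hlow w)⟩
    rw [this]
    exact (lsc_aux u v hu hv q).isClosed_preimage _
  obtain ⟨wm, hwmM, hwm⟩ := lsc_exists_min_on hu.lowerSemicontinuous hMclosed ⟨w₀, hw₀⟩
  have hm : α < u wm := hcon wm hwmM
  set δ := (u wm - α) / 2 with hδ
  have hδpos : 0 < δ := by simp only [hδ]; linarith
  set S := {w : Δ | u w ≤ α + δ} with hS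
  have hSclosed : IsClosed S := isClosed_le hu continuous_const
  obtain ⟨c, hc0, hcS⟩ : ∃ c > 0, ∀ w ∈ S, tauOpt u v q + c ≤ q * u w - v w := by
    rcases eq_empty_or_nonempty S with hSe | hSne
    · exact ⟨1, one_pos, by simp [hSe]⟩
    · obtain ⟨ws, hws, hwsmin⟩ := lsc_exists_min_on (lsc_aux u v hu hv q) hSclosed hSne
      have hwsM : ¬ (q * u ws - v ws = tauOpt u v q) := by
        intro heq
        have h1 : u wm ≤ u ws := hwm ws heq
        have h2 : u ws ≤ α + δ := hws
        simp only [hδ] at h2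
        linarith
      have hlt : tauOpt u v q < q * u ws - v ws := lt_of_le_of_ne (hlow ws) (Ne.symm hwsM)
      exact ⟨q * u ws - v ws - tauOpt u v q, by linarith,
        fun w hw => by have := hwsmin w hw; linarith⟩
  obtain ⟨wc, -, hC⟩ := IsCompact.exists_isMaxOn isCompact_univ univ_nonempty
    (hu.abs.continuousOn (s := univ))
  set C := |u wc| with hCdef
  have hC0 : 0 ≤ C := abs_nonneg _
  have hCb : ∀ w, |u w| ≤ C := fun w => hC (mem_univ w)
  set t := c / (C + |α| + δ) with ht
  have hden : 0 < C + |α| + δ := by positivity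
  have htpos : 0 < t := div_pos hc0 hden
  have h3 : t * C + t * |α| + t * δ = c := by
    have : t * (C + |α| + δ) = c := div_mul_cancel₀ c (ne_of_gt hden)
    linarith [this, mul_add t C (|α|), mul_add t (C + |α|) δ]
  have hkey : ∀ w, tauOpt u v q + t * α + t * δ ≤ (q + t) * u w - v w := by
    intro w
    have hexp : (q + t) * u w - v w = (q * u w - v w) + t * u w := by ring
    rw [hexp]
    by_cases hw : u w ≤ α + δ
    · have h1 := hcS w hw
      have h2 : -C ≤ u w := (abs_le.1 (hCb w)).1
      have p1 : t * (-C) ≤ t * u w := mul_le_mul_of_nonneg_left h2 htpos.le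
      have p2 : t * α ≤ t * |α| := mul_le_mul_of_nonneg_left (le_abs_self α) htpos.le
      nlinarith [p1, p2, h3, h1]
    · push_neg at hw
      have p : t * (α + δ) ≤ t * u w := mul_le_mul_of_nonneg_left hw.le htpos.le
      nlinarith [hlow w, p]
  have hτ : tauOpt u v q + t * α + t * δ ≤ tauOpt u v (q + t) := by
    refine le_csInf (range_nonempty _) ?_
    rintro _ ⟨w, rfl⟩
    exact hkey w
  have h2 := h (q + t)
  have : α * (q + t - q) = t * α := by ring
  rw [this] at h2
  nlinarith [mul_pos htpos hδpos]

lemma tauOpt_neg (u v : Δ → ℝ) (y : ℝ) :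
    tauOpt (fun w => -u w) v y = tauOpt u v (-y) := by
  have : (fun w => y * -u w - v w) = fun w => -y * u w - v w := by
    funext w; ring
  rw [tauOpt, tauOpt, this]

/-- if the set `M(q)` of minimizers is connected then `f(α) = τ*(α)` for
every `α ∈ ∂τ(q)`; if moreover `M(q)` is a singleton then `τ` is differentiable at `q`. -/
theorem stmt_14 {Δ : Type*} [TopologicalSpace Δ] [CompactSpace Δ] [T2Space Δ] [Nonempty Δ]
    (u v : Δ → ℝ) (hu : Continuous u) (hv : UpperSemicontinuous v) (q : ℝ)
    (hconn : IsConnected {w : Δ | q * u w - v w = tauOpt u v q}) :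
    (∀ α : ℝ, InSubdiff (tauOpt u v) q α →
      fOpt u v α = concConj (tauOpt u v) α) ∧
    ({w : Δ | q * u w - v w = tauOpt u v q}.Subsingleton →
      DifferentiableAt ℝ (tauOpt u v) q) := by
  obtain ⟨-, hlow⟩ := tau_min u v hu hv q
  constructor
  · intro α hα
    -- a minimizer with u w ≤ α
    obtain ⟨w₁, hw₁M, hw₁⟩ := key_le u v hu hv q α hα
    -- a minimizer with α ≤ u w, via the symmetry u ↦ -u, q ↦ -q, α ↦ -α
    obtain ⟨w₂, hw₂M, hw₂⟩ : ∃ w, q * u w - v w = tauOpt u v q ∧ α ≤ u w := by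
      have h' : InSubdiff (tauOpt (fun w => -u w) v) (-q) (-α) := by
        intro y
        rw [tauOpt_neg, tauOpt_neg, neg_neg]
        have := hα (-y)
        nlinarith [this]
      obtain ⟨w, hwM, hw⟩ := key_le (fun w => -u w) v hu.neg hv (-q) (-α) h'
      rw [tauOpt_neg, neg_neg] at hwM
      refine ⟨w, ?_, by linarith⟩
      rw [← hwM]; ring
    -- intermediate value: a minimizer with u w = α
    have hIcc : α ∈ Icc (u w₁) (u w₂) := ⟨hw₁, hw₂⟩
    obtain ⟨w, hwM, hw⟩ := hconn.isPreconnected.intermediate_value hw₁M hw₂M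
      hu.continuousOn hIcc
    have hwM' : q * u w - v w = tauOpt u v q := hwM
    have hval : v w = q * α - tauOpt u v q := by rw [← hw]; linarith
    have key : ∀ w', u w' = α → v w' ≤ q * α - tauOpt u v q := by
      intro w' hw'
      have := hlow w'
      rw [hw'] at this
      linarith
    have h1 : fOpt u v α = ((q * α - tauOpt u v q : ℝ) : EReal) := by
      apply le_antisymm
      · apply sSup_le
        rintro x ⟨w', hw', rfl⟩
        show ((v w' : ℝ) : EReal) ≤ _
        exact_mod_cast key w' hw'
      · refine le_sSup ⟨w, hw, ?_⟩
        show ((v w : ℝ) : EReal) = _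
        exact_mod_cast hval
    have h2 : concConj (tauOpt u v) α = ((q * α - tauOpt u v q : ℝ) : EReal) := by
      apply le_antisymm
      · exact iInf_le _ q
      · apply le_iInf
        intro y
        have := hα y
        exact_mod_cast (by nlinarith [this] : q * α - tauOpt u v q ≤ y * α - tauOpt u v y)
    rw [h1, h2]
  · intro hsub
    obtain ⟨w₀, hw₀⟩ := hconn.nonempty
    have hw₀' : q * u w₀ - v w₀ = tauOpt u v q := hw₀
    -- bound on |u|
    obtain ⟨wc, -, hC⟩ := IsCompact.exists_isMaxOn isCompact_univ univ_nonempty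
      (hu.abs.continuousOn (s := univ))
    set C := |u wc| with hCdef
    have hC0 : 0 ≤ C := abs_nonneg _
    have hCb : ∀ w, |u w| ≤ C := fun w => hC (mem_univ w)
    have hder : HasDerivAt (tauOpt u v) (u w₀) q := by
      rw [hasDerivAt_iff_isLittleO]
      rw [Asymptotics.isLittleO_iff]
      intro ε hε
      set S := {w : Δ | ε ≤ |u w - u w₀|} with hSdef
      have hSclosed : IsClosed S :=
        isClosed_le continuous_const (hu.sub continuous_const).abs
      obtain ⟨c, hc0, hcS⟩ : ∃ c > 0, ∀ w ∈ S, tauOpt u v q + c ≤ q * u w - v w := by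
        rcases eq_empty_or_nonempty S with hSe | hSne
        · exact ⟨1, one_pos, by simp [hSe]⟩
        · obtain ⟨ws, hws, hwsmin⟩ := lsc_exists_min_on (lsc_aux u v hu hv q) hSclosed hSne
          have hwsM : ¬ (q * u ws - v ws = tauOpt u v q) := by
            intro heq
            have : ws = w₀ := hsub heq hw₀
            rw [this] at hws
            have : ε ≤ |u w₀ - u w₀| := hws
            simp at this
            linarith
          have hlt : tauOpt u v q < q * u ws - v ws :=
            lt_of_le_of_ne (hlow ws) (Ne.symm hwsM)
          exact ⟨q * u ws - v ws - tauOpt u v q, by linarith,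
            fun w hw => by have := hwsmin w hw; linarith⟩
      have hδ'pos : 0 < c / (2 * C + 1) := by positivity
      have hev : ∀ᶠ y in 𝓝 q, |y - q| ≤ c / (2 * C + 1) := by
        filter_upwards [Metric.closedBall_mem_nhds q hδ'pos] with y hy
        rwa [Metric.mem_closedBall, Real.dist_eq] at hy
      filter_upwards [hev] with y hy
      have hy' : |y - q| * (2 * C + 1) ≤ c := by
        rw [← le_div_iff₀ (by positivity)]
        exact hy
      -- upper bound: τ y ≤ τ q + (y − q) u w₀
      have hup : tauOpt u v y ≤ tauOpt u v q + (y - q) * u w₀ := by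
        have h1 : tauOpt u v y ≤ y * u w₀ - v w₀ := (tau_min u v hu hv y).2 w₀
        nlinarith [h1]
      -- lower bound
      have hlo : tauOpt u v q + (y - q) * u w₀ - ε * |y - q| ≤ tauOpt u v y := by
        refine le_csInf (range_nonempty _) ?_
        rintro _ ⟨w, rfl⟩
        show _ ≤ y * u w - v w
        have hexp : y * u w - v w = (q * u w - v w) + (y - q) * u w := by ring
        rw [hexp]
        by_cases hw : w ∈ S
        · have h1 := hcS w hw
          have a1 : -(|y - q| * C) ≤ (y - q) * u w := by
            have := abs_mul (y - q) (u w)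
            have h2 : |(y - q) * u w| ≤ |y - q| * C :=
              this ▸ mul_le_mul_of_nonneg_left (hCb w) (abs_nonneg _)
            linarith [neg_abs_le ((y - q) * u w)]
          have a2 : (y - q) * u w₀ ≤ |y - q| * C := by
            have := abs_mul (y - q) (u w₀)
            have h2 : |(y - q) * u w₀| ≤ |y - q| * C :=
              this ▸ mul_le_mul_of_nonneg_left (hCb w₀) (abs_nonneg _)
            linarith [le_abs_self ((y - q) * u w₀)]
          have a4 : 0 ≤ ε * |y - q| := mul_nonneg hε.le (abs_nonneg _)
          nlinarith [h1, a1, a2, a4, hy']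
        · simp only [hSdef, mem_setOf_eq, not_le] at hw
          have p1 : (y - q) * (u w - u w₀) ≥ -(|y - q| * ε) := by
            have h1 : |(y - q) * (u w - u w₀)| ≤ |y - q| * ε := by
              rw [abs_mul]
              exact mul_le_mul_of_nonneg_left hw.le (abs_nonneg _)
            linarith [neg_abs_le ((y - q) * (u w - u w₀))]
          have h2 := hlow w
          nlinarith [p1, h2]
      rw [smul_eq_mul, Real.norm_eq_abs, Real.norm_eq_abs]
      rw [abs_le]
      constructor
      · have := hlo
        nlinarith [this]
      · have a4 : 0 ≤ ε * |y - q| := mul_nonneg hε.le (abs_nonneg _)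
        nlinarith [hup, a4]
    exact hder.differentiableAt
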